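/- arXiv:1410.0859 — 2 statements merged into one kernel-verified Lean document; each statement's English description precedes it below -/
import Mathlib

section
/- Let R be a commutative ring containing an invertible element s such that s^k − s^{−k} is invertible in R for every nonzero integer k, and let A be an associative R-algebra. Write {d} := s^d − s^{−d}. Let P : ℤ² → A be a function such that: (i) for every γ ∈ SL₂(ℤ) there is an R-algebra automorphism φ_γ of A with φ_γ(P(x)) = P(γ·x) for all x ∈ ℤ²; (ii) there is an R-algebra anti-automorphism σ of A with σ(P(a,b)) = P(a,−b) for all (a,b) ∈ ℤ²; (iii) [P(k·x), P(j·x)] = 0 for all x ∈ ℤ² and all j, k ∈ ℤ; (iv) [P(1,0), P(−1,k)] = {k}·P(0,k) for all k ∈ ℤ; (v) [P(1,0), P(0,k)] = {k}·P(1,k) for all k ∈ ℤ. Then for all x, y ∈ ℤ², [P(x), P(y)] = {d(x,y)}·P(x+y), where d(x,y) := x₁y₂ − x₂y₁. -/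
/-!
Both sides of `[P x, P y] = {d(x, y)} P (x + y)` transform compatibly under `SL₂(ℤ)` and under the
reflection `(a, b) ↦ (a, -b)`, so the relation only has to be checked for `x = (m, 0)` and
`y = (p, q)` with `m, q > 0`, and a shear fixing `(m, 0)` moves `p` into any window of length `q`.
We induct on `|d(x, y)|`. For `m = 1` and `p ∈ {-1, 0}` the relation is (iv) or (v); if `q = 1`,
the primitive `y` can take over the role of `(1, 0)`; otherwise one of `x`, `y` splits as `u + v`
such that all brackets among `u`, `v` and the other vector are known, and the Jacobi identity with
`{b}{e + a} - {a}{b - e} = {e}{a + b}` gives the relation after cancelling the unit `{d(u, v)}`.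
-/

/-- `{d} := s^d - s^{-d}` for an invertible element `s` of a commutative ring. -/
def brace {R : Type*} [CommRing R] (s : Rˣ) (d : ℤ) : R :=
  ((s ^ d : Rˣ) : R) - ((s ^ (-d) : Rˣ) : R)

section Brace

variable {R : Type*} [CommRing R] (s : Rˣ)

@[simp]
lemma brace_zero : brace s 0 = 0 := by simp [brace]

lemma brace_neg (d : ℤ) : brace s (-d) = -brace s d := by simp [brace]

lemma brace_mul_brace_sub_brace_mul_brace (e a b : ℤ) :
    brace s b * brace s (e + a) - brace s a * brace s (-e + b) = brace s e * brace s (a + b) := by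
  simp only [brace, neg_add, neg_neg, zpow_add, Units.val_mul]
  ring

end Brace

def cross (x y : ℤ × ℤ) : ℤ := x.1 * y.2 - x.2 * y.1

def slAct (a b c d : ℤ) (x : ℤ × ℤ) : ℤ × ℤ := (a * x.1 + b * x.2, c * x.1 + d * x.2)

lemma cross_comm (x y : ℤ × ℤ) : cross y x = -cross x y := by unfold cross; ring

lemma cross_add_right (x y z : ℤ × ℤ) : cross x (y + z) = cross x y + cross x z := by
  simp only [cross, Prod.fst_add, Prod.snd_add]; ring

lemma cross_add_left (x y z : ℤ × ℤ) : cross (x + y) z = cross x z + cross y z := by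
  simp only [cross, Prod.fst_add, Prod.snd_add]; ring

lemma cross_smul_left (m : ℤ) (x y : ℤ × ℤ) : cross (m • x) y = m * cross x y := by
  simp only [cross, Prod.smul_fst, Prod.smul_snd, smul_eq_mul]; ring

lemma cross_smul_smul (j k : ℤ) (x : ℤ × ℤ) : cross (k • x) (j • x) = 0 := by
  simp only [cross, Prod.smul_fst, Prod.smul_snd, smul_eq_mul]; ring

lemma cross_slAct (a b c d : ℤ) (x y : ℤ × ℤ) :
    cross (slAct a b c d x) (slAct a b c d y) = (a * d - b * c) * cross x y := by
  unfold cross slAct; ring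

lemma slAct_add (a b c d : ℤ) (x y : ℤ × ℤ) :
    slAct a b c d (x + y) = slAct a b c d x + slAct a b c d y := by
  ext <;> simp only [slAct, Prod.fst_add, Prod.snd_add] <;> ring

lemma exists_eq_smul_of_ne_zero {x : ℤ × ℤ} (hx : x ≠ 0) :
    ∃ m : ℤ, ∃ z : ℤ × ℤ, 0 < m ∧ IsCoprime z.1 z.2 ∧ x = m • z := by
  have hg : 0 < Int.gcd x.1 x.2 :=
    Int.gcd_pos_iff.mpr (by contrapose! hx; exact Prod.ext hx.1 hx.2)
  obtain ⟨g, a, b, hg0, hab, ha, hb⟩ := Int.exists_gcd_one' hg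
  exact ⟨g, (a, b), by exact_mod_cast hg0, Int.isCoprime_iff_gcd_eq_one.mpr hab,
    Prod.ext (by simp [ha, mul_comm]) (by simp [hb, mul_comm])⟩

lemma exists_slAct_eq {z : ℤ × ℤ} (hz : IsCoprime z.1 z.2) (y : ℤ × ℤ) :
    ∃ a b c d p : ℤ, a * d - b * c = 1 ∧ (∀ m : ℤ, slAct a b c d (m, 0) = m • z) ∧
      slAct a b c d (p, cross z y) = y := by
  obtain ⟨g, g', hgg'⟩ := hz
  refine ⟨z.1, -g', z.2, g, g * y.1 + g' * y.2, by linear_combination hgg', fun m => ?_, ?_⟩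
  · ext <;> simp [slAct, mul_comm]
  · ext
    · simp only [slAct, cross]; linear_combination y.1 * hgg'
    · simp only [slAct, cross]; linear_combination y.2 * hgg'

section Bracket

attribute [local instance] LieRing.ofAssociativeRing

variable {R : Type*} [CommRing R] {A : Type*} [Ring A] [Algebra R A]

def HasBracket (s : Rˣ) (P : ℤ × ℤ → A) (x y : ℤ × ℤ) : Prop :=
  ⁅P x, P y⁆ = brace s (cross x y) • P (x + y)

variable (R) in
def HasSL2Symmetry (P : ℤ × ℤ → A) : Prop :=
  ∀ a b c d : ℤ, a * d - b * c = 1 →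
    ∃ φ : A →ₐ[R] A, ∀ x : ℤ × ℤ, φ (P x) = P (slAct a b c d x)

variable (R) in
def HasReflectionSymmetry (P : ℤ × ℤ → A) : Prop :=
  ∃ σ : A →ₗ[R] A, (∀ u w : A, σ (u * w) = σ w * σ u) ∧ ∀ a b : ℤ, σ (P (a, b)) = P (a, -b)

variable {s : Rˣ} {P : ℤ × ℤ → A} {x y : ℤ × ℤ}

lemma hasBracket_of_cross_eq_zero (h : cross x y = 0) (hc : ⁅P x, P y⁆ = 0) :
    HasBracket s P x y := by
  rw [HasBracket, h, brace_zero, zero_smul, hc]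

lemma HasBracket.symm (h : HasBracket s P x y) : HasBracket s P y x := by
  rw [HasBracket, ← lie_skew, h, cross_comm, brace_neg, neg_smul, neg_neg, add_comm]

lemma HasBracket.map_slAct (hSL : HasSL2Symmetry R P) {a b c d : ℤ} (had : a * d - b * c = 1)
    (h : HasBracket s P x y) : HasBracket s P (slAct a b c d x) (slAct a b c d y) := by
  obtain ⟨φ, hφ⟩ := hSL a b c d had
  have := congrArg φ h
  rw [Ring.lie_def, map_sub, map_mul, map_mul, map_smul, hφ, hφ, hφ, ← Ring.lie_def] at this
  rw [HasBracket, cross_slAct, had, one_mul, ← slAct_add, this]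

lemma HasBracket.conj (hrefl : HasReflectionSymmetry R P) (h : HasBracket s P x y) :
    HasBracket s P (x.1, -x.2) (y.1, -y.2) := by
  obtain ⟨σ, hσ, hσP⟩ := hrefl
  have := congrArg σ h
  rw [Ring.lie_def, map_sub, hσ, hσ, map_smul, hσP, hσP, hσP, ← Ring.lie_def] at this
  refine HasBracket.symm ?_
  unfold HasBracket
  convert this using 3
  · simp only [cross]; ring
  · ext <;> simp [add_comm]

lemma HasBracket.add_left_of_jacobi {u v : ℤ × ℤ} (he : IsUnit (brace s (cross u v)))
    (huv : HasBracket s P u v) (huy : HasBracket s P u y) (hvy : HasBracket s P v y)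
    (hu_vy : HasBracket s P u (v + y)) (hv_uy : HasBracket s P v (u + y)) :
    HasBracket s P (u + v) y := by
  unfold HasBracket at *
  rw [cross_add_right, ← add_assoc] at hu_vy
  rw [cross_add_right, cross_comm u v, add_left_comm, ← add_assoc] at hv_uy
  rw [cross_add_left]
  set e := cross u v
  set a := cross u y
  set b := cross v y
  refine (IsUnit.smul_left_cancel he).mp ?_
  calc brace s e • ⁅P (u + v), P y⁆
      = ⁅⁅P u, P v⁆, P y⁆ := by rw [huv, smul_lie]
    _ = ⁅P u, ⁅P v, P y⁆⁆ - ⁅P v, ⁅P u, P y⁆⁆ := lie_lie _ _ _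
    _ = (brace s b * brace s (e + a) - brace s a * brace s (-e + b)) • P (u + v + y) := by
      rw [hvy, huy, LieAlgebra.lie_smul, LieAlgebra.lie_smul, hu_vy, hv_uy, smul_smul,
        smul_smul, sub_smul]
    _ = brace s e • brace s (a + b) • P (u + v + y) := by
      rw [brace_mul_brace_sub_brace_mul_brace, mul_smul]

lemma HasBracket.smul_left_of_isCoprime (hSL : HasSL2Symmetry R P) {m : ℤ} {z y : ℤ × ℤ}
    (hz : IsCoprime z.1 z.2) (h : ∀ p : ℤ, HasBracket s P (m, 0) (p, cross z y)) :
    HasBracket s P (m • z) y := by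
  obtain ⟨a, b, c, d, p, had, hm, hp⟩ := exists_slAct_eq hz y
  simpa only [hm, hp] using (h p).map_slAct hSL had

lemma HasBracket.shear (hSL : HasSL2Symmetry R P) {m p q : ℤ} (h : HasBracket s P (m, 0) (p, q))
    (t : ℤ) : HasBracket s P (m, 0) (p + t * q, q) := by
  simpa [slAct, add_comm] using h.map_slAct hSL (a := 1) (b := t) (c := 0) (d := 1) (by ring)

lemma hasBracket_smul_e1_of_residues (hSL : HasSL2Symmetry R P) {m q : ℤ} (hq : 0 < q)
    (h : ∀ r : ℤ, -1 ≤ r → r ≤ q - 2 → HasBracket s P (m, 0) (r, q)) (p : ℤ) :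
    HasBracket s P (m, 0) (p, q) := by
  have hr := Int.emod_nonneg (p + 1) hq.ne'
  have hrq := Int.emod_lt_of_pos (p + 1) hq
  have hp : (p + 1) % q - 1 + (p + 1) / q * q = p := by
    linarith [Int.emod_add_mul_ediv (p + 1) q, mul_comm q ((p + 1) / q)]
  simpa only [hp] using (h ((p + 1) % q - 1) (by omega) (by omega)).shear hSL ((p + 1) / q)

lemma hasBracket_smul_e1_of_forall_pos (hrefl : HasReflectionSymmetry R P)
    (hpar : ∀ z : ℤ × ℤ, ∀ j k : ℤ, HasBracket s P (k • z) (j • z)) {m : ℤ} {N : ℕ}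
    (h : ∀ p q : ℤ, 0 < q → m * q ≤ N → HasBracket s P (m, 0) (p, q))
    {p q : ℤ} (hN : (m * q).natAbs ≤ N) : HasBracket s P (m, 0) (p, q) := by
  rcases lt_trichotomy q 0 with hq | rfl | hq
  · simpa using (h p (-q) (by omega) (by rw [mul_neg]; omega)).conj hrefl
  · simpa using hpar (1, 0) p m
  · exact h p q hq (by omega)

variable (s P) in
def BracketBelow (N : ℕ) : Prop :=
  ∀ x y : ℤ × ℤ, (cross x y).natAbs < N → HasBracket s P x y

variable {N : ℕ}

lemma BracketBelow.hasBracket_e1_of_pos (ih : BracketBelow s P N)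
    (hinv : ∀ k : ℤ, k ≠ 0 → IsUnit (brace s k)) (hSL : HasSL2Symmetry R P)
    (h1 : ∀ k : ℤ, HasBracket s P (1, 0) (-1, k)) (h2 : ∀ k : ℤ, HasBracket s P (1, 0) (0, k))
    {p q : ℤ} (hq : 0 < q) (hqN : q ≤ N) : HasBracket s P (1, 0) (p, q) := by
  refine hasBracket_smul_e1_of_residues hSL hq (fun r hr1 hr2 => ?_) p
  rcases (show r = -1 ∨ r = 0 ∨ 1 ≤ r by omega) with rfl | rfl | hr
  · exact h1 q
  · exact h2 q
  · -- `(r, q) = (r, q - 1) + (0, 1)`, and all brackets among these and `(1, 0)` have `|d| < q`.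
    have := HasBracket.add_left_of_jacobi (u := (r, q - 1)) (v := (0, 1)) (y := (1, 0))
      (hinv _ ?_) (ih _ _ ?_) (ih _ _ ?_) (ih _ _ ?_) (ih _ _ ?_) (ih _ _ ?_)
    · simpa using this.symm
    all_goals simp [cross]; omega

lemma BracketBelow.hasBracket_of_isCoprime (ih : BracketBelow s P N)
    (hinv : ∀ k : ℤ, k ≠ 0 → IsUnit (brace s k)) (hSL : HasSL2Symmetry R P)
    (hrefl : HasReflectionSymmetry R P)
    (hpar : ∀ z : ℤ × ℤ, ∀ j k : ℤ, HasBracket s P (k • z) (j • z))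
    (h1 : ∀ k : ℤ, HasBracket s P (1, 0) (-1, k)) (h2 : ∀ k : ℤ, HasBracket s P (1, 0) (0, k))
    {x y : ℤ × ℤ} (hx : IsCoprime x.1 x.2) (hN : (cross x y).natAbs ≤ N) :
    HasBracket s P x y := by
  simpa using HasBracket.smul_left_of_isCoprime (m := 1) hSL hx fun p =>
    hasBracket_smul_e1_of_forall_pos hrefl hpar
      (fun p q hq hqN => ih.hasBracket_e1_of_pos hinv hSL h1 h2 hq (by simpa using hqN))
      (by simpa using hN)

lemma BracketBelow.hasBracket_smul_e1_of_pos (ih : BracketBelow s P N)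
    (hinv : ∀ k : ℤ, k ≠ 0 → IsUnit (brace s k)) (hSL : HasSL2Symmetry R P)
    (hrefl : HasReflectionSymmetry R P)
    (hpar : ∀ z : ℤ × ℤ, ∀ j k : ℤ, HasBracket s P (k • z) (j • z))
    (h1 : ∀ k : ℤ, HasBracket s P (1, 0) (-1, k)) (h2 : ∀ k : ℤ, HasBracket s P (1, 0) (0, k))
    {m p q : ℤ} (hm : 0 < m) (hq : 0 < q) (hN : m * q ≤ N) : HasBracket s P (m, 0) (p, q) := by
  rcases (show m = 1 ∨ q = 1 ∨ (2 ≤ m ∧ 2 ≤ q) by omega) with rfl | rfl | ⟨hm2, hq2⟩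
  · exact ih.hasBracket_e1_of_pos hinv hSL h1 h2 hq (by simpa using hN)
  · exact (ih.hasBracket_of_isCoprime hinv hSL hrefl hpar h1 h2 (x := (p, 1)) (y := (m, 0))
      isCoprime_one_right (by simp [cross]; omega)).symm
  · refine hasBracket_smul_e1_of_residues hSL hq (fun r hr1 hr2 => ?_) p
    have hmq : 2 * q ≤ m * q := by nlinarith
    have hqm : m + 2 * q ≤ m * q + 2 := by nlinarith
    have e1 : (m - 1) * q = m * q - q := by ring
    have e2 : (m - 1) * (-1 + q) = m * q - m - q + 1 := by ring
    -- `(m, 0) = (1, -1) + (m - 1, 1)`; only the bracket of the primitive `(1, -1)` with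
    -- `(m - 1 + r, q + 1)` may reach `|d| = m q`.
    have := HasBracket.add_left_of_jacobi (u := (1, -1)) (v := (m - 1, 1)) (y := (r, q))
      (hinv _ ?_) (ih _ _ ?_) (ih _ _ ?_) (ih _ _ ?_)
      (ih.hasBracket_of_isCoprime hinv hSL hrefl hpar h1 h2 isCoprime_one_left ?_) (ih _ _ ?_)
    · simpa using this
    all_goals simp [cross]; omega

lemma BracketBelow.hasBracket_of_natAbs_cross_le (ih : BracketBelow s P N)
    (hinv : ∀ k : ℤ, k ≠ 0 → IsUnit (brace s k)) (hSL : HasSL2Symmetry R P)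
    (hrefl : HasReflectionSymmetry R P)
    (hpar : ∀ z : ℤ × ℤ, ∀ j k : ℤ, HasBracket s P (k • z) (j • z))
    (h1 : ∀ k : ℤ, HasBracket s P (1, 0) (-1, k)) (h2 : ∀ k : ℤ, HasBracket s P (1, 0) (0, k))
    {x y : ℤ × ℤ} (hN : (cross x y).natAbs ≤ N) : HasBracket s P x y := by
  rcases eq_or_ne x 0 with rfl | hx
  · simpa using hpar y 1 0
  obtain ⟨m, z, hm, hz, rfl⟩ := exists_eq_smul_of_ne_zero hx
  rw [cross_smul_left] at hN
  exact HasBracket.smul_left_of_isCoprime hSL hz fun p =>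
    hasBracket_smul_e1_of_forall_pos hrefl hpar
      (fun p q hq hqN => ih.hasBracket_smul_e1_of_pos hinv hSL hrefl hpar h1 h2 hm hq hqN) hN

theorem hasBracket_of_symmetries
    (hinv : ∀ k : ℤ, k ≠ 0 → IsUnit (brace s k)) (hSL : HasSL2Symmetry R P)
    (hrefl : HasReflectionSymmetry R P)
    (hpar : ∀ z : ℤ × ℤ, ∀ j k : ℤ, HasBracket s P (k • z) (j • z))
    (h1 : ∀ k : ℤ, HasBracket s P (1, 0) (-1, k)) (h2 : ∀ k : ℤ, HasBracket s P (1, 0) (0, k))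
    (x y : ℤ × ℤ) : HasBracket s P x y := by
  induction hN : (cross x y).natAbs using Nat.strong_induction_on generalizing x y with
  | _ N ih =>
    exact BracketBelow.hasBracket_of_natAbs_cross_le (fun x' y' h => ih _ h x' y' rfl)
      hinv hSL hrefl hpar h1 h2 hN.le

end Bracket

theorem stmt_2 {R : Type*} [CommRing R] {A : Type*} [Ring A] [Algebra R A]
    (s : Rˣ) (hinv : ∀ k : ℤ, k ≠ 0 → IsUnit (brace s k))
    (P : ℤ × ℤ → A)
    -- (i) each γ ∈ SL₂(ℤ) is implemented by an R-algebra automorphism permuting the P(x)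
    (hSL : ∀ a b c d : ℤ, a * d - b * c = 1 → ∃ φ : A ≃ₐ[R] A,
        ∀ x : ℤ × ℤ, φ (P x) = P (a * x.1 + b * x.2, c * x.1 + d * x.2))
    -- (ii) an R-linear anti-automorphism σ with σ(P(a,b)) = P(a,−b)
    (hanti : ∃ σ : A ≃ₗ[R] A, σ 1 = 1 ∧ (∀ u w : A, σ (u * w) = σ w * σ u) ∧
        ∀ a b : ℤ, σ (P (a, b)) = P (a, -b))
    -- (iii) parallel elements commute
    (hpar : ∀ x : ℤ × ℤ, ∀ j k : ℤ,
        P (k • x) * P (j • x) - P (j • x) * P (k • x) = 0)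
    -- (iv)
    (hrel1 : ∀ k : ℤ,
        P (1, 0) * P (-1, k) - P (-1, k) * P (1, 0) = brace s k • P (0, k))
    -- (v)
    (hrel2 : ∀ k : ℤ,
        P (1, 0) * P (0, k) - P (0, k) * P (1, 0) = brace s k • P (1, k)) :
    ∀ x y : ℤ × ℤ,
      P x * P y - P y * P x = brace s (x.1 * y.2 - x.2 * y.1) • P (x + y) := by
  have hSL' : HasSL2Symmetry R P := fun a b c d had =>
    let ⟨φ, hφ⟩ := hSL a b c d had
    ⟨φ.toAlgHom, hφ⟩
  have hrefl : HasReflectionSymmetry R P :=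
    let ⟨σ, _, hσ, hσP⟩ := hanti
    ⟨σ.toLinearMap, hσ, hσP⟩
  have hpar' (z : ℤ × ℤ) (j k : ℤ) : HasBracket s P (k • z) (j • z) :=
    hasBracket_of_cross_eq_zero (cross_smul_smul j k z) (hpar z j k)
  have h1 (k : ℤ) : HasBracket s P (1, 0) (-1, k) := by
    simpa [HasBracket, cross, Ring.lie_def] using hrel1 k
  have h2 (k : ℤ) : HasBracket s P (1, 0) (0, k) := by
    simpa [HasBracket, cross, Ring.lie_def] using hrel2 k
  exact hasBracket_of_symmetries hinv hSL' hrefl hpar' h1 h2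
end

section
/- Let λ ⊆ γ be Young diagrams such that θ := γ ∖ λ is a border strip (nonempty, edge-connected, containing no 2×2 square of cells) with |θ| ≥ 2, and let x ∈ θ be the (unique) cell of θ of maximal content c(i,j) = j − i. Then exactly one of the following holds: (a) λ ∪ {x} is a Young diagram; (b) γ ∖ {x} is a Young diagram. -/
/-- Two cells share an edge. -/
def EdgeAdjacent (a b : ℕ × ℕ) : Prop :=
  (a.1 = b.1 ∧ (a.2 + 1 = b.2 ∨ b.2 + 1 = a.2)) ∨
  (a.2 = b.2 ∧ (a.1 + 1 = b.1 ∨ b.1 + 1 = a.1))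

/-- The content of a cell. -/
def cellContent (x : ℕ × ℕ) : ℤ := (x.2 : ℤ) - (x.1 : ℤ)

/-!
Let `x = (i, j)` be the cell of `θ = γ ∖ λ` of maximal content. The cells above and to the right
of `x` have larger content, so the one above lies in `λ` and the one to the right lies outside `γ`.
Hence `λ ∪ {x}` is a diagram iff the cell left of `x` (if any) is not in `θ`, and `γ ∖ {x}` is a
diagram iff the cell below `x` is not in `θ`. Connectivity puts one of these two cells in `θ`, and
both would form a `2 × 2` square with `x`.
-/

section LowerSet

variable {α : Type*} [PartialOrder α] {s : Set α} {a : α}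

theorem IsLowerSet.isLowerSet_insert_iff [IsStronglyCoatomic α] (hs : IsLowerSet s) :
    IsLowerSet (insert a s) ↔ ∀ b, b ⋖ a → b ∈ s := by
  refine ⟨fun h b hba => ?_, fun h c d hdc hc => ?_⟩
  · exact (h hba.le (Set.mem_insert a s)).resolve_left hba.ne
  · rcases hc with rfl | hc
    · rcases hdc.eq_or_lt with rfl | hlt
      · exact Set.mem_insert d s
      · obtain ⟨e, hde, hec⟩ := exists_le_covBy_of_lt hlt
        exact Or.inr (hs hde (h e hec))
    · exact Or.inr (hs hdc hc)

theorem IsLowerSet.isLowerSet_diff_singleton_iff [IsStronglyAtomic α] (hs : IsLowerSet s) :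
    IsLowerSet (s \ {a}) ↔ ∀ b, a ⋖ b → b ∉ s := by
  refine ⟨fun h b hab hb => ?_, fun h c d hdc hc => ⟨hs hdc hc.1, ?_⟩⟩
  · exact (h hab.le ⟨hb, hab.ne'⟩).2 rfl
  · rintro rfl
    obtain ⟨e, hde, hec⟩ := exists_covBy_le_of_lt (hdc.lt_of_ne (Ne.symm hc.2))
    exact h e hde (hs hec hc.1)

end LowerSet

theorem exists_edgeAdjacent_mem {θ : Finset (ℕ × ℕ)} (hcard : 2 ≤ θ.card)
    (hconn : ∀ a ∈ θ, ∀ b ∈ θ,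
      Relation.ReflTransGen (fun x y => x ∈ θ ∧ y ∈ θ ∧ EdgeAdjacent x y) a b)
    {x : ℕ × ℕ} (hx : x ∈ θ) : ∃ y ∈ θ, EdgeAdjacent x y := by
  obtain ⟨y, hy, hyx⟩ := Finset.exists_mem_ne hcard x
  obtain hxy | ⟨z, ⟨-, hz, hxz⟩, -⟩ := (hconn x hx y hy).cases_head
  · exact absurd hxy.symm hyx
  · exact ⟨z, hz, hxz⟩

theorem EdgeAdjacent.eq_below_or_left {i j : ℕ} {y : ℕ × ℕ} (h : EdgeAdjacent (i, j) y)
    (hy : cellContent y ≤ cellContent (i, j)) : y = (i + 1, j) ∨ y.1 = i ∧ y.2 + 1 = j := by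
  obtain ⟨a, b⟩ := y
  simp only [EdgeAdjacent, cellContent, Prod.mk.injEq] at h hy ⊢
  omega

theorem exists_left_mem_or_below_mem {θ : Finset (ℕ × ℕ)} (hcard : 2 ≤ θ.card)
    (hconn : ∀ a ∈ θ, ∀ b ∈ θ,
      Relation.ReflTransGen (fun x y => x ∈ θ ∧ y ∈ θ ∧ EdgeAdjacent x y) a b)
    {i j : ℕ} (hx : (i, j) ∈ θ) (hmax : ∀ y ∈ θ, cellContent y ≤ cellContent (i, j)) :
    (∃ b, b + 1 = j ∧ (i, b) ∈ θ) ∨ (i + 1, j) ∈ θ := by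
  obtain ⟨y, hy, hxy⟩ := exists_edgeAdjacent_mem hcard hconn hx
  obtain rfl | ⟨rfl, hb⟩ := hxy.eq_below_or_left (hmax y hy)
  · exact Or.inr hy
  · exact Or.inl ⟨y.2, hb, hy⟩

namespace YoungDiagram

theorem isLowerSet_insert_cells_iff (μ : YoungDiagram) (i j : ℕ) :
    IsLowerSet (↑(insert (i, j) μ.cells) : Set (ℕ × ℕ)) ↔
      (∀ a, a + 1 = i → (a, j) ∈ μ) ∧ ∀ b, b + 1 = j → (i, b) ∈ μ := by
  rw [Finset.coe_insert, μ.isLowerSet.isLowerSet_insert_iff]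
  simp only [Prod.forall, Prod.mk_covBy_mk_iff, Nat.covBy_iff_add_one_eq, Finset.mem_coe,
    mem_cells]
  grind

theorem isLowerSet_erase_cells_iff (μ : YoungDiagram) (i j : ℕ) :
    IsLowerSet (↑(μ.cells.erase (i, j)) : Set (ℕ × ℕ)) ↔
      (i + 1, j) ∉ μ ∧ (i, j + 1) ∉ μ := by
  rw [Finset.coe_erase, μ.isLowerSet.isLowerSet_diff_singleton_iff]
  simp [Prod.mk_covBy_mk_iff, or_imp, forall_and]

variable {lam gam : YoungDiagram} {i j : ℕ}

theorem mem_above_of_maxContent (hx : (i, j) ∈ gam.cells \ lam.cells)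
    (hmax : ∀ y ∈ gam.cells \ lam.cells, cellContent y ≤ cellContent (i, j))
    {a : ℕ} (ha : a + 1 = i) : (a, j) ∈ lam := by
  by_contra hlam
  have hgam : (a, j) ∈ gam := gam.up_left_mem (by omega) le_rfl (Finset.mem_sdiff.1 hx).1
  have := hmax _ (Finset.mem_sdiff.2 ⟨hgam, hlam⟩)
  simp only [cellContent] at this
  omega

theorem notMem_right_of_maxContent (hx : (i, j) ∈ gam.cells \ lam.cells)
    (hmax : ∀ y ∈ gam.cells \ lam.cells, cellContent y ≤ cellContent (i, j)) :
    (i, j + 1) ∉ gam := by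
  intro hgam
  have hlam : (i, j + 1) ∉ lam := fun h =>
    (Finset.mem_sdiff.1 hx).2 (lam.up_left_mem le_rfl (by omega) h)
  have := hmax _ (Finset.mem_sdiff.2 ⟨hgam, hlam⟩)
  simp only [cellContent] at this
  omega

theorem not_left_mem_and_below_mem (hsq : ¬ ∃ i j : ℕ, (i, j) ∈ gam.cells \ lam.cells ∧
      (i + 1, j) ∈ gam.cells \ lam.cells ∧ (i, j + 1) ∈ gam.cells \ lam.cells ∧
      (i + 1, j + 1) ∈ gam.cells \ lam.cells)
    (hx : (i, j) ∈ gam.cells \ lam.cells) :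
    ¬((∃ b, b + 1 = j ∧ (i, b) ∈ gam.cells \ lam.cells) ∧ (i + 1, j) ∈ gam.cells \ lam.cells) := by
  rintro ⟨⟨b, rfl, hleft⟩, hbelow⟩
  simp only [Finset.mem_sdiff, mem_cells] at hleft hbelow
  have hcorner : (i + 1, b) ∈ gam.cells \ lam.cells := Finset.mem_sdiff.2
    ⟨gam.up_left_mem le_rfl (by omega) hbelow.1,
     fun h => hleft.2 (lam.up_left_mem (by omega) le_rfl h)⟩
  exact hsq ⟨i, b, Finset.mem_sdiff.2 hleft, hcorner, hx, Finset.mem_sdiff.2 hbelow⟩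

end YoungDiagram

theorem stmt_6_general (lam gam : YoungDiagram)
    (θ : Finset (ℕ × ℕ)) (hθ : θ = gam.cells \ lam.cells)
    -- θ is a border strip with at least 2 cells:
    (hcard : 2 ≤ θ.card)
    (hconn : ∀ a ∈ θ, ∀ b ∈ θ,
      Relation.ReflTransGen (fun x y => x ∈ θ ∧ y ∈ θ ∧ EdgeAdjacent x y) a b)
    (hsq : ¬ ∃ i j : ℕ,
      (i, j) ∈ θ ∧ (i + 1, j) ∈ θ ∧ (i, j + 1) ∈ θ ∧ (i + 1, j + 1) ∈ θ)
    -- x is the cell of θ of maximal content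
    (x : ℕ × ℕ) (hx : x ∈ θ)
    (hmax : ∀ y ∈ θ, cellContent y ≤ cellContent x) :
    Xor' (IsLowerSet (↑(insert x lam.cells) : Set (ℕ × ℕ)))
         (IsLowerSet (↑(gam.cells.erase x) : Set (ℕ × ℕ))) := by
  subst hθ
  obtain ⟨i, j⟩ := x
  have hx' := Finset.mem_sdiff.1 hx
  have hleft : (∀ b, b + 1 = j → (i, b) ∈ lam) ↔
      ¬∃ b, b + 1 = j ∧ (i, b) ∈ gam.cells \ lam.cells := by
    refine ⟨fun h ⟨b, hb, hθb⟩ => (Finset.mem_sdiff.1 hθb).2 (h b hb), fun h b hb => ?_⟩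
    by_contra hlam
    exact h ⟨b, hb, Finset.mem_sdiff.2 ⟨gam.up_left_mem le_rfl (by omega) hx'.1, hlam⟩⟩
  have hbelow : (i + 1, j) ∉ gam ↔ (i + 1, j) ∉ gam.cells \ lam.cells := by
    refine ⟨fun h hθ => h (Finset.mem_sdiff.1 hθ).1, fun h hgam => h ?_⟩
    exact Finset.mem_sdiff.2 ⟨hgam, fun hlam => hx'.2 (lam.up_left_mem (by omega) le_rfl hlam)⟩
  rw [Xor', YoungDiagram.isLowerSet_insert_cells_iff, YoungDiagram.isLowerSet_erase_cells_iff,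
    and_iff_right fun _ => YoungDiagram.mem_above_of_maxContent hx hmax,
    and_iff_left (YoungDiagram.notMem_right_of_maxContent hx hmax), hleft, hbelow, xor_not_not,
    xor_iff_or_and_not_and]
  exact ⟨exists_left_mem_or_below_mem hcard hconn hx hmax,
    YoungDiagram.not_left_mem_and_below_mem hsq hx⟩

theorem stmt_6 (lam gam : YoungDiagram) (hsub : lam ≤ gam)
    (θ : Finset (ℕ × ℕ)) (hθ : θ = gam.cells \ lam.cells)
    -- θ is a border strip with at least 2 cells:
    (hcard : 2 ≤ θ.card)
    (hconn : ∀ a ∈ θ, ∀ b ∈ θ,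
      Relation.ReflTransGen (fun x y => x ∈ θ ∧ y ∈ θ ∧ EdgeAdjacent x y) a b)
    (hsq : ¬ ∃ i j : ℕ,
      (i, j) ∈ θ ∧ (i + 1, j) ∈ θ ∧ (i, j + 1) ∈ θ ∧ (i + 1, j + 1) ∈ θ)
    -- x is the cell of θ of maximal content
    (x : ℕ × ℕ) (hx : x ∈ θ)
    (hmax : ∀ y ∈ θ, cellContent y ≤ cellContent x) :
    Xor' (IsLowerSet (↑(insert x lam.cells) : Set (ℕ × ℕ)))
         (IsLowerSet (↑(gam.cells.erase x) : Set (ℕ × ℕ))) :=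
  stmt_6_general lam gam θ hθ hcard hconn hsq x hx hmax
end
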